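/- If Z satisfies E exp(α|Z|) < ∞ for every α > 0 (all exponential moments), and card(C_n)/n → 0, with f bounded on ∪_n C_n, then π_n = (1/n)∑_{x_i^n∈C_n} f(x_i^n)·Z_i is superexponentially negligible: limsup_n (1/n) log P(|π_n| > δ) = −∞ for every δ > 0. -/

import Mathlib

open MeasureTheory Filter
open scoped ENNReal

noncomputable section

/-- Large deviation bounds along the speed sequence `φ n` for the random variables
`W (φ n)`, with rate function `I` taking values in `[0, ∞]`. -/
def LDPAlong {Ω E : Type*} [MeasurableSpace Ω] [TopologicalSpace E]
    (μ : Measure Ω) (φ : ℕ → ℕ) (W : ℕ → Ω → E) (I : E → ℝ≥0∞) : Prop :=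
  (∀ F : Set E, IsClosed F →
      Filter.limsup
        (fun n => (((φ n : ℝ))⁻¹ : EReal) * ENNReal.log (μ {ω | W (φ n) ω ∈ F}))
        Filter.atTop ≤ -(⨅ x ∈ F, (I x : EReal))) ∧
  (∀ G : Set E, IsOpen G →
      -(⨅ x ∈ G, (I x : EReal)) ≤
      Filter.liminf
        (fun n => (((φ n : ℝ))⁻¹ : EReal) * ENNReal.log (μ {ω | W (φ n) ω ∈ G}))
        Filter.atTop)

/-- The large deviation principle at speed `n` for the sequence `W n`. -/
def LDP {Ω E : Type*} [MeasurableSpace Ω] [TopologicalSpace E]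
    (μ : Measure Ω) (W : ℕ → Ω → E) (I : E → ℝ≥0∞) : Prop :=
  LDPAlong μ id W I

/-- A good rate function: lower semicontinuous with compact sublevel sets. -/
def GoodRate {E : Type*} [TopologicalSpace E] (I : E → ℝ≥0∞) : Prop :=
  LowerSemicontinuous I ∧ ∀ c : ℝ≥0∞, c ≠ ⊤ → IsCompact {x | I x ≤ c}

/-! Chernoff's bound for the i.i.d. sum `∑_{i ∈ C n} ‖Z i‖`, with the weights bounded so that
`|π n| > δ` forces `∑_{i ∈ C n} ‖Z i‖ ≥ n δ / B`, gives for every `κ > 0`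
`P(|π n| > δ) ≤ exp (-κ n δ / B) · (E exp (κ ‖Z 0‖)) ^ #(C n)`.
As `#(C n) = o(n)`, the moment factor is `exp (o(n))`, so the limsup is at most `-κ δ / B`;
`κ` is arbitrary. -/

open ProbabilityTheory Real

theorem norm_mulVec_le_card_mul {m n α : Type*} [Fintype m] [Fintype n] [SeminormedRing α]
    (A : m → n → α) (v : n → α) :
    ‖Matrix.mulVec A v‖ ≤ Fintype.card n * ‖A‖ * ‖v‖ := by
  refine pi_norm_le_iff_of_nonneg (by positivity) |>.2 fun i => ?_
  calc ‖∑ j, A i j * v j‖ ≤ ∑ j, ‖A i j‖ * ‖v j‖ :=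
        (norm_sum_le _ _).trans (Finset.sum_le_sum fun j _ => norm_mul_le _ _)
    _ ≤ ∑ _j : n, ‖A‖ * ‖v‖ := by
        gcongr with j
        · exact (norm_le_pi_norm (A i) j).trans (norm_le_pi_norm A i)
        · exact norm_le_pi_norm v j
    _ = Fintype.card n * ‖A‖ * ‖v‖ := by simp [mul_assoc]

theorem norm_sum_mulVec_le {ι m n α : Type*} [Fintype m] [Fintype n] [SeminormedRing α]
    (s : Finset ι) (A : ι → m → n → α) (v : ι → n → α) {M : ℝ} (hA : ∀ i ∈ s, ‖A i‖ ≤ M) :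
    ‖∑ i ∈ s, Matrix.mulVec (A i) (v i)‖ ≤ Fintype.card n * M * ∑ i ∈ s, ‖v i‖ := by
  rw [Finset.mul_sum]
  refine (norm_sum_le _ _).trans (Finset.sum_le_sum fun i hi => ?_)
  exact (norm_mulVec_le_card_mul _ _).trans (by gcongr; exact hA i hi)

theorem nat_mul_le_norm_of_lt_norm_inv_smul {E : Type*} [SeminormedAddCommGroup E]
    [NormedSpace ℝ E] {n : ℕ} {δ : ℝ} {x : E} (h : δ < ‖(n : ℝ)⁻¹ • x‖) : n * δ ≤ ‖x‖ :=
  calc n * δ ≤ n * ‖(n : ℝ)⁻¹ • x‖ := by gcongr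
    _ = n * (n : ℝ)⁻¹ * ‖x‖ := by rw [norm_smul, norm_inv, Real.norm_natCast, mul_assoc]
    _ ≤ ‖x‖ := mul_le_of_le_one_left (norm_nonneg _) mul_inv_le_one

theorem measure_ge_sum_le_exp_mul_mgf_pow {Ω ι : Type*} [MeasurableSpace Ω] {μ : Measure Ω}
    {X : ι → Ω → ℝ} {j : ι} (hmeas : ∀ i, Measurable (X i)) (hindep : iIndepFun X μ)
    (hident : ∀ i, IdentDistrib (X i) (X j) μ μ) {κ : ℝ} (hκ : 0 ≤ κ)
    (hint : Integrable (fun ω => exp (κ * X j ω)) μ) (s : Finset ι) (t : ℝ) :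
    μ {ω | t ≤ ∑ i ∈ s, X i ω} ≤ ENNReal.ofReal (exp (-κ * t) * mgf (X j) μ κ ^ s.card) := by
  have := hindep.isProbabilityMeasure
  have hint_sum : Integrable (fun ω => exp (κ * (∑ i ∈ s, X i) ω)) μ :=
    hindep.integrable_exp_mul_sum hmeas fun i _ =>
      ((hident i).comp (measurable_const_mul κ).exp).integrable_iff.2 hint
  have hmgf : mgf (∑ i ∈ s, X i) μ κ = mgf (X j) μ κ ^ s.card := by
    rw [hindep.mgf_sum hmeas]
    exact Finset.prod_eq_pow_card fun i _ => mgf_congr_of_identDistrib _ _ (hident i) κ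
  rw [← ofReal_measureReal, ← hmgf]
  refine ENNReal.ofReal_le_ofReal ?_
  simpa only [Finset.sum_apply] using measure_ge_le_exp_mul_mgf t hκ hint_sum

theorem limsup_inv_mul_log_le_of_le_exp_mul_pow {p : ℕ → ℝ≥0∞} {k : ℕ → ℕ} {c L : ℝ}
    (hL : 0 < L) (hk : Tendsto (fun n => (k n : ℝ) / n) atTop (nhds 0))
    (hp : ∀ n, p n ≤ ENNReal.ofReal (exp (-(c * n)) * L ^ k n)) :
    limsup (fun n : ℕ => ((n : ℝ)⁻¹ : EReal) * ENNReal.log (p n)) atTop ≤ ((-c : ℝ) : EReal) := by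
  have hrate : ∀ᶠ n : ℕ in atTop, ((n : ℝ)⁻¹ : EReal) * ENNReal.log (p n)
      ≤ ((-c + (k n : ℝ) / n * Real.log L : ℝ) : EReal) := by
    filter_upwards [eventually_gt_atTop 0] with n hn
    have hlog : ENNReal.log (p n) ≤ ((-(c * n) + k n * Real.log L : ℝ) : EReal) := by
      refine (ENNReal.log_monotone (hp n)).trans_eq ?_
      rw [ENNReal.log_ofReal_of_pos (by positivity), Real.log_mul (by positivity) (by positivity),
        Real.log_exp, Real.log_pow]
    refine (mul_le_mul_of_nonneg_left hlog
      (EReal.inv_nonneg_of_nonneg (EReal.coe_nonneg.2 n.cast_nonneg))).trans_eq ?_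
    rw [← EReal.coe_inv, ← EReal.coe_mul]
    congr 1
    field_simp
  have hlim : Tendsto (fun n : ℕ => -c + (k n : ℝ) / n * Real.log L) atTop (nhds (-c)) := by
    simpa using (hk.mul_const (Real.log L)).const_add (-c)
  exact (limsup_le_limsup hrate).trans_eq (EReal.tendsto_coe.2 hlim).limsup_eq

theorem partial_mean_superexp_negligible_general {Ω : Type*} [MeasurableSpace Ω] (μ : Measure Ω)
    [IsProbabilityMeasure μ] {d m : ℕ} (Z : ℕ → Ω → (Fin d → ℝ))
    (hmeas : ∀ i, Measurable (Z i))
    (hindep : ProbabilityTheory.iIndepFun Z μ)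
    (hident : ∀ i, μ.map (Z i) = μ.map (Z 0))
    (hexp : ∀ α > (0 : ℝ), Integrable (fun ω => Real.exp (α * ‖Z 0 ω‖)) μ)
    (C : ℕ → Finset ℕ)
    (hC : Tendsto (fun n : ℕ => ((C n).card : ℝ) / n) atTop (nhds 0))
    (a : ℕ → ℕ → (Fin m → Fin d → ℝ)) (M : ℝ)
    (ha : ∀ n, ∀ i ∈ C n, ‖a n i‖ ≤ M) :
    ∀ δ > (0 : ℝ),
      Filter.limsup
        (fun n : ℕ => (((n : ℝ))⁻¹ : EReal) * ENNReal.log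
          (μ {ω | δ < ‖(n : ℝ)⁻¹ • ∑ i ∈ C n, Matrix.mulVec (a n i) (Z i ω)‖}))
        atTop = ⊥ := by
  intro δ hδ
  set B : ℝ := max (d * M) 1
  have hB : 0 < B := lt_max_of_lt_right one_pos
  have hnorm_indep : iIndepFun (fun i ω => ‖Z i ω‖) μ :=
    hindep.comp (fun _ => norm) fun _ => measurable_norm
  have hnorm_ident : ∀ i, IdentDistrib (fun ω => ‖Z i ω‖) (fun ω => ‖Z 0 ω‖) μ μ := fun i =>
    (IdentDistrib.mk (hmeas i).aemeasurable (hmeas 0).aemeasurable (hident i)).comp measurable_norm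
  have hevent : ∀ n : ℕ, {ω | δ < ‖(n : ℝ)⁻¹ • ∑ i ∈ C n, Matrix.mulVec (a n i) (Z i ω)‖}
      ⊆ {ω | n * δ / B ≤ ∑ i ∈ C n, ‖Z i ω‖} := by
    intro n ω hω
    rw [Set.mem_ofPred_eq, div_le_iff₀ hB, mul_comm _ B]
    calc n * δ ≤ ‖∑ i ∈ C n, Matrix.mulVec (a n i) (Z i ω)‖ :=
          nat_mul_le_norm_of_lt_norm_inv_smul hω
      _ ≤ d * M * ∑ i ∈ C n, ‖Z i ω‖ := by
          simpa using norm_sum_mulVec_le (C n) (a n) (fun i => Z i ω) (ha n)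
      _ ≤ B * ∑ i ∈ C n, ‖Z i ω‖ := by gcongr; exact le_max_left _ _
  refine (EReal.eq_bot_iff_forall_lt _).2 fun y => ?_
  set c := |y| + 1
  -- chosen so that the Chernoff factor `exp (-κ · n δ / B)` is `exp (-c n)`
  set κ := c * B / δ with hκ_def
  have hκ : 0 < κ := by positivity
  have hchernoff : ∀ n : ℕ, μ {ω | δ < ‖(n : ℝ)⁻¹ • ∑ i ∈ C n, Matrix.mulVec (a n i) (Z i ω)‖}
      ≤ ENNReal.ofReal (exp (-(c * n)) * mgf (fun ω => ‖Z 0 ω‖) μ κ ^ (C n).card) := fun n =>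
    calc _ ≤ μ {ω | n * δ / B ≤ ∑ i ∈ C n, ‖Z i ω‖} := measure_mono (hevent n)
      _ ≤ ENNReal.ofReal (exp (-κ * (n * δ / B)) * mgf (fun ω => ‖Z 0 ω‖) μ κ ^ (C n).card) :=
        measure_ge_sum_le_exp_mul_mgf_pow (fun i => (hmeas i).norm) hnorm_indep hnorm_ident
          hκ.le (hexp κ hκ) (C n) _
      _ = _ := by rw [hκ_def]; congr 3; field_simp
  calc _ ≤ ((-c : ℝ) : EReal) :=
        limsup_inv_mul_log_le_of_le_exp_mul_pow (mgf_pos (hexp κ hκ)) hC hchernoff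
    _ < y := EReal.coe_lt_coe_iff.2 (by linarith [neg_abs_le y])

/-- If `Z` has all exponential moments, `card (C n) / n → 0` and the weights are bounded,
then `π n = (1/n) ∑_{i ∈ C n} a n i · Z i` is superexponentially negligible:
`limsup (1/n) log P(|π n| > δ) = -∞` for every `δ > 0`. -/
theorem partial_mean_superexp_negligible {Ω : Type*} [MeasurableSpace Ω] (μ : Measure Ω)
    [IsProbabilityMeasure μ] {d m : ℕ} (Z : ℕ → Ω → (Fin d → ℝ))
    (hmeas : ∀ i, Measurable (Z i))
    (hindep : ProbabilityTheory.iIndepFun Z μ)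
    (hident : ∀ i, μ.map (Z i) = μ.map (Z 0))
    (hexp : ∀ α > (0 : ℝ), Integrable (fun ω => Real.exp (α * ‖Z 0 ω‖)) μ)
    (C : ℕ → Finset ℕ) (hCn : ∀ n, C n ⊆ Finset.range n)
    (hC : Tendsto (fun n : ℕ => ((C n).card : ℝ) / n) atTop (nhds 0))
    (a : ℕ → ℕ → (Fin m → Fin d → ℝ)) (M : ℝ)
    (ha : ∀ n, ∀ i ∈ C n, ‖a n i‖ ≤ M) :
    ∀ δ > (0 : ℝ),
      Filter.limsup
        (fun n : ℕ => (((n : ℝ))⁻¹ : EReal) * ENNReal.log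
          (μ {ω | δ < ‖(n : ℝ)⁻¹ • ∑ i ∈ C n, Matrix.mulVec (a n i) (Z i ω)‖}))
        atTop = ⊥ :=
  partial_mean_superexp_negligible_general μ Z hmeas hindep hident hexp C hC a M ha
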